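/- arXiv:1901.07158 — 2 statements merged into one kernel-verified Lean document; each statement's English description precedes it below -/
import Mathlib

section
/- Let dim(·|·) be a bivariant Sylvester module rank function for a unital ring R. For any left R-modules M₁, M₂ ⊆ M, dim(M₁+M₂|M) + dim(M₁∩M₂|M) ≤ dim(M₁|M) + dim(M₂|M). -/
universe u
open scoped NNReal ENNReal

/-- A bivariant Sylvester module rank function for a unital ring `R`: to each pair of left
`R`-modules `N ⊆ M` (encoded as a submodule `N` of a module `M`) it assigns a value
`d M N ∈ ℝ≥0∞`, thought of as `dim(N|M)`, satisfying isomorphism invariance, normalization,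
direct sum additivity, the two continuity conditions, and additivity. -/
structure BivariantSylvesterRank (R : Type u) [Ring R] where
  d : ∀ (M : Type u) [AddCommGroup M] [Module R M], Submodule R M → ℝ≥0∞
  iso_invariant : ∀ (M N : Type u) [AddCommGroup M] [Module R M] [AddCommGroup N] [Module R N]
      (e : M ≃ₗ[R] N) (p : Submodule R M),
      d M p = d N (p.map (e : M →ₗ[R] N))
  d_zero : d PUnit ⊤ = 0
  d_ring : d R ⊤ = 1
  d_prod : ∀ (M N : Type u) [AddCommGroup M] [Module R M] [AddCommGroup N] [Module R N]
      (p : Submodule R M) (q : Submodule R N),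
      d (M × N) (p.prod q) = d M p + d N q
  continuity_sup : ∀ (M : Type u) [AddCommGroup M] [Module R M] (p : Submodule R M),
      d M p = ⨆ (p' : {p' : Submodule R M // p'.FG ∧ p' ≤ p}), d M p'.1
  continuity_inf : ∀ (M : Type u) [AddCommGroup M] [Module R M] (p : Submodule R M), p.FG →
      d M p = ⨅ (q : {q : Submodule R M // q.FG ∧ p ≤ q}), d q.1 (p.comap q.1.subtype)
  additivity : ∀ (M : Type u) [AddCommGroup M] [Module R M] (p : Submodule R M),
      d M ⊤ = d M p + d (M ⧸ p) ⊤

section MV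
variable {R : Type u} [Ring R] {E : Type u} [AddCommGroup E] [Module R E] (N₁ N₂ : Submodule R E)

noncomputable def bsrPhi : E →ₗ[R] (E ⧸ N₁) × (E ⧸ N₂) := (N₁.mkQ).prod (N₂.mkQ)

noncomputable def bsrPsi : (E ⧸ N₁) × (E ⧸ N₂) →ₗ[R] E ⧸ (N₁ ⊔ N₂) :=
  (Submodule.mapQ N₁ (N₁ ⊔ N₂) LinearMap.id (fun x hx => le_sup_left (a := N₁) (b := N₂) hx)).coprod
    (-(Submodule.mapQ N₂ (N₁ ⊔ N₂) LinearMap.id (fun x hx => le_sup_right (a := N₁) (b := N₂) hx)))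

theorem bsrPsi_surj : Function.Surjective (bsrPsi N₁ N₂) := by
  intro x
  obtain ⟨e, rfl⟩ := Submodule.mkQ_surjective _ x
  exact ⟨(N₁.mkQ e, 0), by simp [bsrPsi, Submodule.mapQ_apply]⟩

theorem bsr_ker_phi : LinearMap.ker (bsrPhi N₁ N₂) = N₁ ⊓ N₂ := by
  rw [bsrPhi, LinearMap.ker_prod, Submodule.ker_mkQ, Submodule.ker_mkQ]

theorem bsr_ker_psi : LinearMap.ker (bsrPsi N₁ N₂) = LinearMap.range (bsrPhi N₁ N₂) := by
  ext ⟨a, b⟩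
  obtain ⟨x, rfl⟩ := Submodule.mkQ_surjective _ a
  obtain ⟨y, rfl⟩ := Submodule.mkQ_surjective _ b
  simp only [LinearMap.mem_ker, LinearMap.mem_range, bsrPsi, bsrPhi, LinearMap.coprod_apply,
    LinearMap.neg_apply, Submodule.mkQ_apply, Submodule.mapQ_apply, LinearMap.id_coe, id_eq,
    LinearMap.prod_apply, Function.prod, Prod.mk.injEq]
  constructor
  · intro h
    rw [← sub_eq_add_neg, ← Submodule.Quotient.mk_sub, Submodule.Quotient.mk_eq_zero] at h
    obtain ⟨u, hu, v, hv, huv⟩ := Submodule.mem_sup.mp h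
    refine ⟨x - u, ?_, ?_⟩
    · rw [Submodule.Quotient.eq]
      simpa using N₁.neg_mem hu
    · rw [Submodule.Quotient.eq]
      have : x - u - y = v := by rw [sub_right_comm, ← huv]; abel
      rw [this]
      exact hv
  · rintro ⟨e, he1, he2⟩
    have h1 : e - x ∈ N₁ := (Submodule.Quotient.eq _).mp he1
    have h2 : e - y ∈ N₂ := (Submodule.Quotient.eq _).mp he2
    rw [← sub_eq_add_neg, ← Submodule.Quotient.mk_sub, Submodule.Quotient.mk_eq_zero]
    have hxy : x - y = -(e - x) + (e - y) := by abel
    rw [hxy]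
    exact Submodule.add_mem_sup (N₁.neg_mem h1) h2
end MV

namespace BivariantSylvesterRank
variable {R : Type u} [Ring R] (dim : BivariantSylvesterRank R)

theorem dim_mono {M : Type u} [AddCommGroup M] [Module R M] {p q : Submodule R M} (h : p ≤ q) :
    dim.d M p ≤ dim.d M q := by
  rw [dim.continuity_sup M p, dim.continuity_sup M q]
  exact iSup_le fun p' => le_iSup_of_le ⟨p'.1, p'.2.1, p'.2.2.trans h⟩ le_rfl

theorem dim_iso_top {M N : Type u} [AddCommGroup M] [Module R M] [AddCommGroup N] [Module R N]
    (e : M ≃ₗ[R] N) : dim.d M ⊤ = dim.d N ⊤ := by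
  rw [dim.iso_invariant M N e ⊤, Submodule.map_top]
  congr 1
  exact LinearMap.range_eq_top.mpr e.surjective

theorem dim_fin (n : ℕ) : dim.d (Fin n → R) ⊤ = n := by
  induction n with
  | zero =>
      rw [dim_iso_top dim (LinearEquiv.ofSubsingleton (M := Fin 0 → R) (M₂ := PUnit.{u+1})),
        dim.d_zero]
      simp
  | succ n ih =>
      have e : (Fin (n+1) → R) ≃ₗ[R] R × (Fin n → R) :=
        (LinearEquiv.piCongrLeft' R (fun _ => R) (finSuccEquiv n)).trans
          (LinearEquiv.piOptionEquivProd R)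
      rw [dim_iso_top dim e, ← Submodule.prod_top, dim.d_prod, dim.d_ring, ih]
      push_cast
      ring

theorem dim_top_ne_top {E : Type u} [AddCommGroup E] [Module R E]
    (hE : (⊤ : Submodule R E).FG) : dim.d E ⊤ ≠ ⊤ := by
  have : Module.Finite R E := Module.finite_def.mpr hE
  obtain ⟨n, f, hf⟩ := Module.Finite.exists_fin' (R := R) (M := E)
  have h1 := dim.additivity (Fin n → R) (LinearMap.ker f)
  rw [dim_fin, dim_iso_top dim (f.quotKerEquivOfSurjective hf)] at h1
  intro htop
  rw [htop, add_top] at h1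
  exact ENNReal.natCast_ne_top n h1

/-- Core case: finitely generated ambient module. -/
theorem core {E : Type u} [AddCommGroup E] [Module R E] (hE : (⊤ : Submodule R E).FG)
    (N₁ N₂ : Submodule R E) :
    dim.d E (N₁ ⊔ N₂) + dim.d E (N₁ ⊓ N₂) ≤ dim.d E N₁ + dim.d E N₂ := by
  have hT : dim.d E ⊤ ≠ ⊤ := dim.dim_top_ne_top hE
  -- W := range of φ : E → E⧸N₁ × E⧸N₂ is f.g.
  have hWfg : (LinearMap.range (bsrPhi N₁ N₂)).FG := by
    rw [LinearMap.range_eq_map]; exact hE.map _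
  -- dim of W inside the product is at most dim of E⧸(N₁⊓N₂)
  have hW : dim.d ((E ⧸ N₁) × (E ⧸ N₂)) (LinearMap.range (bsrPhi N₁ N₂))
      ≤ dim.d (E ⧸ (N₁ ⊓ N₂)) ⊤ := by
    have h1 : dim.d ((E ⧸ N₁) × (E ⧸ N₂)) (LinearMap.range (bsrPhi N₁ N₂))
        ≤ dim.d ↥(LinearMap.range (bsrPhi N₁ N₂))
          ((LinearMap.range (bsrPhi N₁ N₂)).comap (LinearMap.range (bsrPhi N₁ N₂)).subtype) := by
      rw [dim.continuity_inf _ _ hWfg]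
      exact iInf_le _ (⟨LinearMap.range (bsrPhi N₁ N₂), hWfg, le_rfl⟩ :
        {q : Submodule R ((E ⧸ N₁) × (E ⧸ N₂)) // q.FG ∧ LinearMap.range (bsrPhi N₁ N₂) ≤ q})
    rw [Submodule.comap_subtype_self] at h1
    refine h1.trans (le_of_eq ?_)
    have e := (bsrPhi N₁ N₂).quotKerEquivRange
    rw [bsr_ker_phi] at e
    exact (dim.dim_iso_top e).symm
  -- split the product along W
  have hsplit := dim.additivity ((E ⧸ N₁) × (E ⧸ N₂)) (LinearMap.range (bsrPhi N₁ N₂))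
  have hq : dim.d (((E ⧸ N₁) × (E ⧸ N₂)) ⧸ (LinearMap.range (bsrPhi N₁ N₂))) ⊤
      = dim.d (E ⧸ (N₁ ⊔ N₂)) ⊤ := by
    have e := (bsrPsi N₁ N₂).quotKerEquivOfSurjective (bsrPsi_surj N₁ N₂)
    rw [bsr_ker_psi] at e
    exact dim.dim_iso_top e
  have hC : dim.d ((E ⧸ N₁) × (E ⧸ N₂)) ⊤ = dim.d (E ⧸ N₁) ⊤ + dim.d (E ⧸ N₂) ⊤ := by
    rw [← Submodule.prod_top, dim.d_prod]
  have hkey : dim.d (E ⧸ N₁) ⊤ + dim.d (E ⧸ N₂) ⊤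
      ≤ dim.d (E ⧸ (N₁ ⊓ N₂)) ⊤ + dim.d (E ⧸ (N₁ ⊔ N₂)) ⊤ := by
    rw [← hC, hsplit, hq]
    exact add_le_add_left hW _
  -- additivity identities
  have h1 := dim.additivity E N₁
  have h2 := dim.additivity E N₂
  have h3 := dim.additivity E (N₁ ⊔ N₂)
  have h4 := dim.additivity E (N₁ ⊓ N₂)
  have hb1 : dim.d (E ⧸ N₁) ⊤ ≠ ⊤ := by
    intro h; rw [h1, h, add_top] at hT; exact hT rfl
  have hb2 : dim.d (E ⧸ N₂) ⊤ ≠ ⊤ := by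
    intro h; rw [h2, h, add_top] at hT; exact hT rfl
  have hfin : dim.d (E ⧸ N₁) ⊤ + dim.d (E ⧸ N₂) ⊤ ≠ ⊤ := ENNReal.add_ne_top.mpr ⟨hb1, hb2⟩
  rw [← ENNReal.add_le_add_iff_right hfin]
  calc dim.d E (N₁ ⊔ N₂) + dim.d E (N₁ ⊓ N₂) + (dim.d (E ⧸ N₁) ⊤ + dim.d (E ⧸ N₂) ⊤)
      ≤ dim.d E (N₁ ⊔ N₂) + dim.d E (N₁ ⊓ N₂)
        + (dim.d (E ⧸ (N₁ ⊓ N₂)) ⊤ + dim.d (E ⧸ (N₁ ⊔ N₂)) ⊤) := add_le_add_right hkey _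
    _ = (dim.d E (N₁ ⊔ N₂) + dim.d (E ⧸ (N₁ ⊔ N₂)) ⊤)
        + (dim.d E (N₁ ⊓ N₂) + dim.d (E ⧸ (N₁ ⊓ N₂)) ⊤) := by ring
    _ = dim.d E ⊤ + dim.d E ⊤ := by rw [← h3, ← h4]
    _ = (dim.d E N₁ + dim.d (E ⧸ N₁) ⊤) + (dim.d E N₂ + dim.d (E ⧸ N₂) ⊤) := by rw [← h1, ← h2]
    _ = dim.d E N₁ + dim.d E N₂ + (dim.d (E ⧸ N₁) ⊤ + dim.d (E ⧸ N₂) ⊤) := by ring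

theorem env_le {M : Type u} [AddCommGroup M] [Module R M] {p q : Submodule R M}
    (hp : p.FG) (hq : q.FG) (hpq : p ≤ q) :
    dim.d M p ≤ dim.d ↥q (p.comap q.subtype) := by
  rw [dim.continuity_inf M p hp]
  exact iInf_le _ (⟨q, hq, hpq⟩ : {q' : Submodule R M // q'.FG ∧ p ≤ q'})

theorem dim_subtype_subtype {M : Type u} [AddCommGroup M] [Module R M]
    {N A Ew : Submodule R M} (hAE : A ≤ Ew) :
    dim.d ↥(A.comap Ew.subtype) ((N.comap Ew.subtype).comap (A.comap Ew.subtype).subtype)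
      = dim.d ↥A (N.comap A.subtype) := by
  rw [dim.iso_invariant _ _ (Submodule.comapSubtypeEquivOfLe hAE)]
  congr 1
  ext x
  simp only [Submodule.mem_map, Submodule.mem_comap, Submodule.subtype_apply]
  constructor
  · rintro ⟨y, hy, rfl⟩
    simpa [Submodule.comapSubtypeEquivOfLe_apply_coe] using hy
  · intro hx
    refine ⟨⟨⟨(x : M), hAE x.2⟩, x.2⟩, hx, ?_⟩
    apply Subtype.ext
    simp [Submodule.comapSubtypeEquivOfLe_apply_coe]

theorem mid {M : Type u} [AddCommGroup M] [Module R M] (N₁ N₂ Q : Submodule R M)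
    (h1 : N₁.FG) (h2 : N₂.FG) (hQ : Q.FG) (hQle : Q ≤ N₁ ⊓ N₂) :
    dim.d M (N₁ ⊔ N₂) + dim.d M Q ≤ dim.d M N₁ + dim.d M N₂ := by
  rw [dim.continuity_inf M N₁ h1, dim.continuity_inf M N₂ h2, ENNReal.iInf_add]
  refine le_iInf fun A => ?_
  rw [ENNReal.add_iInf]
  refine le_iInf fun B => ?_
  set Ew := A.1 ⊔ B.1 with hEw
  have hEwfg : Ew.FG := A.2.1.sup B.2.1
  have hN₁E : N₁ ≤ Ew := A.2.2.trans le_sup_left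
  have hN₂E : N₂ ≤ Ew := B.2.2.trans le_sup_right
  have hQE : Q ≤ Ew := (hQle.trans inf_le_left).trans hN₁E
  have hsupE : N₁ ⊔ N₂ ≤ Ew := sup_le hN₁E hN₂E
  have htop : (⊤ : Submodule R ↥Ew).FG := (Submodule.fg_top Ew).mpr hEwfg
  have hinj : Function.Injective Ew.subtype := Submodule.injective_subtype Ew
  -- comap of sup equals sup of comaps (everything below Ew)
  have hmapn₁ : (N₁.comap Ew.subtype).map Ew.subtype = N₁ := by
    rw [Submodule.map_comap_subtype, inf_eq_right.mpr hN₁E]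
  have hmapn₂ : (N₂.comap Ew.subtype).map Ew.subtype = N₂ := by
    rw [Submodule.map_comap_subtype, inf_eq_right.mpr hN₂E]
  have hcomap_sup : (N₁ ⊔ N₂).comap Ew.subtype
      = N₁.comap Ew.subtype ⊔ N₂.comap Ew.subtype := by
    rw [← hmapn₁, ← hmapn₂, ← Submodule.map_sup, Submodule.comap_map_eq_of_injective hinj,
      hmapn₁, hmapn₂]
  -- fg of comaps
  have hn₁fg : (N₁.comap Ew.subtype).FG := by
    apply Submodule.fg_of_fg_map_injective _ hinj
    rwa [hmapn₁]
  have hn₂fg : (N₂.comap Ew.subtype).FG := by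
    apply Submodule.fg_of_fg_map_injective _ hinj
    rwa [hmapn₂]
  -- LHS bounds
  have e1 : dim.d M (N₁ ⊔ N₂) ≤ dim.d ↥Ew ((N₁ ⊔ N₂).comap Ew.subtype) :=
    dim.env_le (h1.sup h2) hEwfg hsupE
  have e2 : dim.d M Q ≤ dim.d ↥Ew (Q.comap Ew.subtype) := dim.env_le hQ hEwfg hQE
  have e2' : dim.d ↥Ew (Q.comap Ew.subtype)
      ≤ dim.d ↥Ew (N₁.comap Ew.subtype ⊓ N₂.comap Ew.subtype) := by
    apply dim.dim_mono
    rw [← Submodule.comap_inf]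
    exact Submodule.comap_mono hQle
  -- core inequality in Ew
  have hcore := dim.core htop (N₁.comap Ew.subtype) (N₂.comap Ew.subtype)
  -- RHS bounds: push down to A and B
  have r1 : dim.d ↥Ew (N₁.comap Ew.subtype) ≤ dim.d ↥A.1 (N₁.comap A.1.subtype) := by
    have hA'fg : (A.1.comap Ew.subtype).FG := by
      apply Submodule.fg_of_fg_map_injective _ hinj
      rw [Submodule.map_comap_subtype, inf_eq_right.mpr (le_sup_left : A.1 ≤ Ew)]
      exact A.2.1
    have := dim.env_le hn₁fg hA'fg (Submodule.comap_mono A.2.2)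
    rwa [dim.dim_subtype_subtype (le_sup_left : A.1 ≤ Ew)] at this
  have r2 : dim.d ↥Ew (N₂.comap Ew.subtype) ≤ dim.d ↥B.1 (N₂.comap B.1.subtype) := by
    have hB'fg : (B.1.comap Ew.subtype).FG := by
      apply Submodule.fg_of_fg_map_injective _ hinj
      rw [Submodule.map_comap_subtype, inf_eq_right.mpr (le_sup_right : B.1 ≤ Ew)]
      exact B.2.1
    have := dim.env_le hn₂fg hB'fg (Submodule.comap_mono B.2.2)
    rwa [dim.dim_subtype_subtype (le_sup_right : B.1 ≤ Ew)] at this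
  calc dim.d M (N₁ ⊔ N₂) + dim.d M Q
      ≤ dim.d ↥Ew ((N₁ ⊔ N₂).comap Ew.subtype)
        + dim.d ↥Ew (N₁.comap Ew.subtype ⊓ N₂.comap Ew.subtype) :=
        add_le_add e1 (e2.trans e2')
    _ = dim.d ↥Ew (N₁.comap Ew.subtype ⊔ N₂.comap Ew.subtype)
        + dim.d ↥Ew (N₁.comap Ew.subtype ⊓ N₂.comap Ew.subtype) := by rw [hcomap_sup]
    _ ≤ dim.d ↥Ew (N₁.comap Ew.subtype) + dim.d ↥Ew (N₂.comap Ew.subtype) := hcore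
    _ ≤ dim.d ↥A.1 (N₁.comap A.1.subtype) + dim.d ↥B.1 (N₂.comap B.1.subtype) :=
        add_le_add r1 r2

end BivariantSylvesterRank

/-- submodularity. For a bivariant Sylvester module rank function for `R`
and submodules `N₁, N₂` of an `R`-module `M`,
`dim(N₁+N₂|M) + dim(N₁∩N₂|M) ≤ dim(N₁|M) + dim(N₂|M)`. -/
theorem bivariantSylvesterRank_submodular (R : Type u) [Ring R]
    (dim : BivariantSylvesterRank R)
    (M : Type u) [AddCommGroup M] [Module R M] (N₁ N₂ : Submodule R M) :
    dim.d M (N₁ ⊔ N₂) + dim.d M (N₁ ⊓ N₂) ≤ dim.d M N₁ + dim.d M N₂ := by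
  classical
  rw [dim.continuity_sup M (N₁ ⊔ N₂), dim.continuity_sup M (N₁ ⊓ N₂)]
  have hne1 : Nonempty {p' : Submodule R M // p'.FG ∧ p' ≤ N₁ ⊔ N₂} :=
    ⟨⟨⊥, Submodule.fg_bot, bot_le⟩⟩
  have hne2 : Nonempty {p' : Submodule R M // p'.FG ∧ p' ≤ N₁ ⊓ N₂} :=
    ⟨⟨⊥, Submodule.fg_bot, bot_le⟩⟩
  refine ENNReal.iSup_add_iSup_le fun P Q => ?_
  obtain ⟨s, hs⟩ := P.2.1
  have hmem : ∀ x ∈ s, ∃ y ∈ N₁, ∃ z ∈ N₂, y + z = x := by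
    intro x hx
    exact Submodule.mem_sup.mp (P.2.2 (hs ▸ Submodule.subset_span hx))
  choose y hy z hz hyz using hmem
  set t₁ : Finset M := s.attach.image fun x => y x.1 x.2 with ht₁
  set t₂ : Finset M := s.attach.image fun x => z x.1 x.2 with ht₂
  set N₁' := Submodule.span R (t₁ : Set M) ⊔ Q.1 with hN₁'
  set N₂' := Submodule.span R (t₂ : Set M) ⊔ Q.1 with hN₂'
  have fg1 : N₁'.FG := Submodule.FG.sup ⟨t₁, rfl⟩ Q.2.1
  have fg2 : N₂'.FG := Submodule.FG.sup ⟨t₂, rfl⟩ Q.2.1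
  have hsp1 : Submodule.span R (t₁ : Set M) ≤ N₁ := by
    rw [Submodule.span_le]
    intro a ha
    simp only [ht₁, Finset.coe_image, Set.mem_image] at ha
    obtain ⟨x, -, rfl⟩ := ha
    exact hy x.1 x.2
  have hsp2 : Submodule.span R (t₂ : Set M) ≤ N₂ := by
    rw [Submodule.span_le]
    intro a ha
    simp only [ht₂, Finset.coe_image, Set.mem_image] at ha
    obtain ⟨x, -, rfl⟩ := ha
    exact hz x.1 x.2
  have hN₁'le : N₁' ≤ N₁ := sup_le hsp1 (Q.2.2.trans inf_le_left)
  have hN₂'le : N₂' ≤ N₂ := sup_le hsp2 (Q.2.2.trans inf_le_right)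
  have hPle : P.1 ≤ N₁' ⊔ N₂' := by
    rw [← hs, Submodule.span_le]
    intro x hx
    have hx' : x ∈ s := hx
    have : x = y x hx' + z x hx' := (hyz x hx').symm
    rw [this]
    refine Submodule.add_mem_sup (le_sup_left (a := Submodule.span R (t₁ : Set M)) ?_)
      (le_sup_left (a := Submodule.span R (t₂ : Set M)) ?_)
    · exact Submodule.subset_span (by
        simp only [ht₁, Finset.coe_image, Set.mem_image]
        exact ⟨⟨x, hx'⟩, by simp, rfl⟩)
    · exact Submodule.subset_span (by
        simp only [ht₂, Finset.coe_image, Set.mem_image]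
        exact ⟨⟨x, hx'⟩, by simp, rfl⟩)
  have hQle' : Q.1 ≤ N₁' ⊓ N₂' := le_inf le_sup_right le_sup_right
  calc dim.d M P.1 + dim.d M Q.1
      ≤ dim.d M (N₁' ⊔ N₂') + dim.d M Q.1 :=
        add_le_add_left (dim.dim_mono hPle) _
    _ ≤ dim.d M N₁' + dim.d M N₂' := dim.mid _ _ _ fg1 fg2 Q.2.1 hQle'
    _ ≤ dim.d M N₁ + dim.d M N₂ := add_le_add (dim.dim_mono hN₁'le) (dim.dim_mono hN₂'le)
end

section
/- Let dim(·|·) be a bivariant Sylvester module rank function for a unital ring R. For any left R-modules M₁ ⊆ M₂ and M, and any R-module homomorphism α : M₂ → M, one has dim(α(M₁)|α(M₂)) ≤ dim(M₁|M₂). -/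
/-!
Continuity lets one pass to finitely generated submodules and ambient modules, and the first
isomorphism theorem reduces `α` to a quotient map `M → M ⧸ K`; so assume `M` finitely generated,
where every value of `dim` is finite. By additivity, `dim((N + K)/K | M/K) ≤ dim(N|M)` is then
equivalent to `dim(M/N) + dim(M/K) ≤ dim(M) + dim(M/(N + K))`, which is additivity applied to the
image of the diagonal `M → M/N × M/K`: it is the kernel of `(x̄, ȳ) ↦ x - y` onto `M/(N + K)`,
and a quotient of `M`.
-/

universe u
open scoped NNReal ENNReal

namespace Submodule

variable {R M : Type*} [Ring R] [AddCommGroup M] [Module R M]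

lemma exists_fg_le_map_eq {M' : Type*} [AddCommGroup M'] [Module R M'] {f : M →ₗ[R] M'}
    {p : Submodule R M} {q : Submodule R M'} (hq : q.FG) (hqp : q ≤ p.map f) :
    ∃ p' ≤ p, p'.FG ∧ p'.map f = q := by
  obtain ⟨s, rfl⟩ := hq
  have hs : (s : Set M') ⊆ f '' p := by rw [← map_coe]; exact subset_span.trans hqp
  obtain ⟨t, htp, htfin, hts⟩ :=
    Set.exists_subset_image_finite_and.1 ⟨_, hs, s.finite_toSet, rfl⟩
  exact ⟨span R t, span_le.2 htp, fg_span htfin, by rw [map_span, hts]⟩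

variable (p q : Submodule R M)

def quotientProdToQuotientSup : (M ⧸ p) × (M ⧸ q) →ₗ[R] M ⧸ (p ⊔ q) :=
  (factor le_sup_left).coprod (-factor le_sup_right)

@[simp]
lemma quotientProdToQuotientSup_mk (x y : M) :
    quotientProdToQuotientSup p q (Quotient.mk x, Quotient.mk y) = Quotient.mk (x - y) := by
  simp [quotientProdToQuotientSup, sub_eq_add_neg]

lemma quotientProdToQuotientSup_surjective :
    Function.Surjective (quotientProdToQuotientSup p q) := by
  intro z
  obtain ⟨x, rfl⟩ := (p ⊔ q).mkQ_surjective z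
  exact ⟨(Quotient.mk x, Quotient.mk 0), by rw [quotientProdToQuotientSup_mk, sub_zero]; rfl⟩

lemma ker_quotientProdToQuotientSup :
    LinearMap.ker (quotientProdToQuotientSup p q) = LinearMap.range (p.mkQ.prod q.mkQ) := by
  apply le_antisymm
  · rintro ⟨a, b⟩ hab
    obtain ⟨x, rfl⟩ := p.mkQ_surjective a
    obtain ⟨y, rfl⟩ := q.mkQ_surjective b
    rw [LinearMap.mem_ker, mkQ_apply, mkQ_apply, quotientProdToQuotientSup_mk,
      Quotient.mk_eq_zero] at hab
    obtain ⟨n, hn, k, hk, hnk⟩ := mem_sup.1 hab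
    refine ⟨x - n, Prod.ext ((Quotient.eq p).2 ?_) ((Quotient.eq q).2 ?_)⟩
    · simpa using p.neg_mem hn
    · rwa [eq_sub_of_add_eq' hnk, sub_right_comm] at hk
  · rintro _ ⟨x, rfl⟩
    simp [quotientProdToQuotientSup]

end Submodule

namespace BivariantSylvesterRank

variable {R : Type u} [Ring R] (dim : BivariantSylvesterRank R)
variable {M M' : Type u} [AddCommGroup M] [Module R M] [AddCommGroup M'] [Module R M']

lemma d_mono {p q : Submodule R M} (h : p ≤ q) : dim.d M p ≤ dim.d M q := by
  rw [dim.continuity_sup M p, dim.continuity_sup M q]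
  exact iSup_le fun p' => le_iSup_of_le ⟨p'.1, p'.2.1, p'.2.2.trans h⟩ le_rfl

lemma d_top_quotient_le (p : Submodule R M) : dim.d (M ⧸ p) ⊤ ≤ dim.d M ⊤ := by
  rw [dim.additivity M p]
  exact le_add_self

lemma d_top_congr (e : M ≃ₗ[R] M') : dim.d M ⊤ = dim.d M' ⊤ := by
  rw [dim.iso_invariant M M' e ⊤, Submodule.map_top, LinearEquiv.range]

lemma d_le_d_top_of_fg {p : Submodule R M} (hp : p.FG) : dim.d M p ≤ dim.d p ⊤ := by
  rw [dim.continuity_inf M p hp]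
  exact (iInf_le _ ⟨p, hp, le_rfl⟩).trans_eq (by rw [Submodule.comap_subtype_self])

lemma d_top_pi_fin_ne_top (n : ℕ) : dim.d (Fin n → R) ⊤ ≠ ⊤ := by
  induction n with
  | zero =>
    rw [dim.d_top_congr (LinearEquiv.ofSubsingleton (R := R) (Fin 0 → R) PUnit.{u + 1}),
      dim.d_zero]
    exact ENNReal.zero_ne_top
  | succ n ih =>
    rw [← dim.d_top_congr (Fin.consLinearEquiv R fun _ : Fin (n + 1) => R),
      ← Submodule.prod_top, dim.d_prod, dim.d_ring]
    exact ENNReal.add_ne_top.2 ⟨ENNReal.one_ne_top, ih⟩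

lemma d_top_ne_top [Module.Finite R M] : dim.d M ⊤ ≠ ⊤ := by
  obtain ⟨n, f, hf⟩ := Module.Finite.exists_fin' R M
  rw [← dim.d_top_congr (f.quotKerEquivOfSurjective hf)]
  exact ne_top_of_le_ne_top (dim.d_top_pi_fin_ne_top n) (dim.d_top_quotient_le _)

/-- The image `P` of `M → M ⧸ p × M ⧸ q` has quotient `M ⧸ (p ⊔ q)`, and `dim(P|·) ≤ dim(M)`
because `P` is a finitely generated quotient of `M`. -/
lemma d_top_quotient_add_d_top_quotient_le [Module.Finite R M] (p q : Submodule R M) :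
    dim.d (M ⧸ p) ⊤ + dim.d (M ⧸ q) ⊤ ≤ dim.d M ⊤ + dim.d (M ⧸ (p ⊔ q)) ⊤ := by
  set δ := p.mkQ.prod q.mkQ
  have hquot : dim.d (((M ⧸ p) × (M ⧸ q)) ⧸ LinearMap.range δ) ⊤ = dim.d (M ⧸ (p ⊔ q)) ⊤ :=
    dim.d_top_congr <| (Submodule.quotEquivOfEq _ _
      (p.ker_quotientProdToQuotientSup q).symm).trans <|
      (p.quotientProdToQuotientSup q).quotKerEquivOfSurjective
        (p.quotientProdToQuotientSup_surjective q)
  have hrange : dim.d _ (LinearMap.range δ) ≤ dim.d M ⊤ := calc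
    _ ≤ dim.d (LinearMap.range δ) ⊤ := dim.d_le_d_top_of_fg (Submodule.fg_range δ)
    _ = dim.d (M ⧸ LinearMap.ker δ) ⊤ := (dim.d_top_congr δ.quotKerEquivRange).symm
    _ ≤ dim.d M ⊤ := dim.d_top_quotient_le _
  calc dim.d (M ⧸ p) ⊤ + dim.d (M ⧸ q) ⊤
      = dim.d _ (LinearMap.range δ) + dim.d (M ⧸ (p ⊔ q)) ⊤ := by
        rw [← dim.d_prod, Submodule.prod_top, dim.additivity _ (LinearMap.range δ), hquot]
    _ ≤ dim.d M ⊤ + dim.d (M ⧸ (p ⊔ q)) ⊤ := by gcongr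

lemma d_map_mkQ_le_of_finite [Module.Finite R M] (p q : Submodule R M) :
    dim.d (M ⧸ q) (p.map q.mkQ) ≤ dim.d M p := by
  have hfin : dim.d (M ⧸ p) ⊤ + dim.d (M ⧸ (q ⊔ p)) ⊤ ≠ ⊤ :=
    ENNReal.add_ne_top.2 ⟨ne_top_of_le_ne_top dim.d_top_ne_top (dim.d_top_quotient_le p),
      ne_top_of_le_ne_top dim.d_top_ne_top (dim.d_top_quotient_le _)⟩
  have hquot : dim.d (M ⧸ q) ⊤ = dim.d (M ⧸ q) (p.map q.mkQ) + dim.d (M ⧸ (q ⊔ p)) ⊤ := by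
    rw [dim.additivity _ (p.map q.mkQ),
      dim.d_top_congr (Submodule.quotientQuotientEquivQuotientSup q p)]
  refine (ENNReal.add_le_add_iff_right hfin).1 ?_
  calc dim.d (M ⧸ q) (p.map q.mkQ) + (dim.d (M ⧸ p) ⊤ + dim.d (M ⧸ (q ⊔ p)) ⊤)
      = dim.d (M ⧸ q) ⊤ + dim.d (M ⧸ p) ⊤ := by rw [hquot]; ring
    _ ≤ dim.d M ⊤ + dim.d (M ⧸ (q ⊔ p)) ⊤ := dim.d_top_quotient_add_d_top_quotient_le q p
    _ = dim.d M p + (dim.d (M ⧸ p) ⊤ + dim.d (M ⧸ (q ⊔ p)) ⊤) := by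
      rw [dim.additivity M p, add_assoc]

lemma d_range_eq_d_map_mkQ_ker (f : M →ₗ[R] M') (p : Submodule R M) :
    dim.d (LinearMap.range f) ((p.map f).comap (LinearMap.range f).subtype)
      = dim.d (M ⧸ LinearMap.ker f) (p.map (LinearMap.ker f).mkQ) := by
  rw [dim.iso_invariant _ _ f.quotKerEquivRange, ← Submodule.map_comp]
  congr 1
  have hcomp : (f.quotKerEquivRange : (M ⧸ LinearMap.ker f) →ₗ[R] LinearMap.range f) ∘ₗ
      (LinearMap.ker f).mkQ = f.rangeRestrict := by
    ext x
    simp [LinearMap.quotKerEquivRange_apply_mk]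
  rw [hcomp]
  ext y
  simp only [Submodule.mem_map, Submodule.mem_comap, Submodule.coe_subtype,
    LinearMap.rangeRestrict, LinearMap.codRestrict_apply, Subtype.ext_iff]

lemma d_range_le_of_finite [Module.Finite R M] (f : M →ₗ[R] M') (p : Submodule R M) :
    dim.d (LinearMap.range f) ((p.map f).comap (LinearMap.range f).subtype) ≤ dim.d M p := by
  rw [d_range_eq_d_map_mkQ_ker]
  exact dim.d_map_mkQ_le_of_finite p _

/-- Both sides are infima over finitely generated `r ⊇ p` (continuity), and the image of `r` in
`M ⧸ q` is one of the competitors on the left. -/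
lemma d_map_mkQ_le_of_fg {p : Submodule R M} (hp : p.FG) (q : Submodule R M) :
    dim.d (M ⧸ q) (p.map q.mkQ) ≤ dim.d M p := by
  rw [dim.continuity_inf M p hp, dim.continuity_inf _ _ (hp.map _)]
  refine le_iInf fun ⟨r, hr, hpr⟩ =>
    (iInf_le _ ⟨r.map q.mkQ, hr.map _, Submodule.map_mono hpr⟩).trans ?_
  have : Module.Finite R r := Module.Finite.iff_fg.2 hr
  have hrange : LinearMap.range (q.mkQ ∘ₗ r.subtype) = r.map q.mkQ := by
    rw [LinearMap.range_comp, Submodule.range_subtype]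
  have himage : (p.comap r.subtype).map (q.mkQ ∘ₗ r.subtype) = p.map q.mkQ := by
    rw [Submodule.map_comp, Submodule.map_comap_subtype, inf_eq_right.2 hpr]
  have key := dim.d_range_le_of_finite (q.mkQ ∘ₗ r.subtype) (p.comap r.subtype)
  rwa [himage, hrange] at key

lemma d_map_mkQ_le (p q : Submodule R M) : dim.d (M ⧸ q) (p.map q.mkQ) ≤ dim.d M p := by
  rw [dim.continuity_sup _ (p.map q.mkQ)]
  refine iSup_le fun ⟨p', hp', hp'p⟩ => ?_
  obtain ⟨p'', hp''p, hp'', rfl⟩ := Submodule.exists_fg_le_map_eq hp' hp'p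
  exact (dim.d_map_mkQ_le_of_fg hp'' q).trans (dim.d_mono hp''p)

end BivariantSylvesterRank

/-- For a bivariant Sylvester module rank function for `R`, modules
`N ⊆ M₂` and a homomorphism `α : M₂ → M`, one has `dim(α(N)|α(M₂)) ≤ dim(N|M₂)`. Here
`α(M₂)` is the range of `α` and `α(N)` is viewed as a submodule of it. -/
theorem bivariantSylvesterRank_map_le (R : Type u) [Ring R]
    (dim : BivariantSylvesterRank R)
    (M₂ M : Type u) [AddCommGroup M₂] [Module R M₂] [AddCommGroup M] [Module R M]
    (N : Submodule R M₂) (α : M₂ →ₗ[R] M) :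
    dim.d ↥(LinearMap.range α)
        ((N.map α).comap (LinearMap.range α).subtype) ≤ dim.d M₂ N := by
  rw [dim.d_range_eq_d_map_mkQ_ker]
  exact dim.d_map_mkQ_le N _
end
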